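/- arXiv:1501.03895 — 7 statements merged into one kernel-verified Lean document; each statement's English description precedes it below -/
import Mathlib

section
/- For every root-weighted tree automaton A over a graded alphabet Σ with weights in a commutative monoid M, there exists a sequential root-weighted tree automaton A' over Σ such that P_A = P_{A'}, i.e. P_A(t) = P_{A'}(t) for every tree t ∈ T_Σ. -/
/-- A tree over a graded alphabet `σ` with arity function `ar`. -/
inductive GTree (σ : Type) (ar : σ → ℕ) : Type
  | node (f : σ) (ts : Fin (ar f) → GTree σ ar) : GTree σ ar

/-- A root-weighted tree automaton (RWTA) over the graded alphabet `σ`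
with weights in `M`. -/
structure RWTA (σ : Type) (ar : σ → ℕ) (M : Type) where
  Q : Type
  fin : Finite Q := by infer_instance
  ν : Q → M
  δ : ∀ f : σ, (Fin (ar f) → Q) → Q → Prop

attribute [instance] RWTA.fin

variable {σ : Type} {ar : σ → ℕ} {M : Type}

/-- The reachability map `Δ_A`. -/
def RWTA.Delta (A : RWTA σ ar M) : GTree σ ar → Set A.Q
  | .node f ts => {q | ∃ qs : Fin (ar f) → A.Q,
      (∀ i, qs i ∈ A.Delta (ts i)) ∧ A.δ f qs q}

/-- The tree series realized by an RWTA: `P_A(t) = ν(Δ_A(t))`. -/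
noncomputable def RWTA.P [AddCommMonoid M] (A : RWTA σ ar M) (t : GTree σ ar) : M :=
  ∑ᶠ q ∈ A.Delta t, A.ν q

/-- An RWTA is sequential when `Card (Δ_A(t)) ≤ 1` for every tree. -/
def RWTA.Sequential (A : RWTA σ ar M) : Prop :=
  ∀ t : GTree σ ar, (A.Delta t).Subsingleton

/-- The down language of a state. -/
def RWTA.DownLang (A : RWTA σ ar M) (q : A.Q) : Set (GTree σ ar) :=
  {t | q ∈ A.Delta t}

/-- The sequential RWTA associated with `A` by the subset construction. -/
noncomputable def RWTA.subset [AddCommMonoid M] (A : RWTA σ ar M) : RWTA σ ar M where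
  Q := Set A.Q
  ν := fun S => ∑ᶠ q ∈ S, A.ν q
  δ := fun f Qs S =>
    S = {q | ∃ qs : Fin (ar f) → A.Q, (∀ i, qs i ∈ Qs i) ∧ A.δ f qs q}

/-- The accessible part of an RWTA. -/
def RWTA.acc (A : RWTA σ ar M) : RWTA σ ar M where
  Q := {q : A.Q // (A.DownLang q).Nonempty}
  ν := fun q => A.ν q.1
  δ := fun f qs q => A.δ f (fun i => (qs i).1) q.1

/-- The sum of two RWTAs (on the disjoint union of the state sets). -/
def RWTA.sum (A₁ A₂ : RWTA σ ar M) : RWTA σ ar M where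
  Q := A₁.Q ⊕ A₂.Q
  ν := Sum.elim A₁.ν A₂.ν
  δ := fun f qs q =>
    (∃ (qs' : Fin (ar f) → A₁.Q) (q' : A₁.Q),
        q = Sum.inl q' ∧ (∀ i, qs i = Sum.inl (qs' i)) ∧ A₁.δ f qs' q') ∨
    (∃ (qs' : Fin (ar f) → A₂.Q) (q' : A₂.Q),
        q = Sum.inr q' ∧ (∀ i, qs i = Sum.inr (qs' i)) ∧ A₂.δ f qs' q')

/-- The product of two RWTAs. -/
def RWTA.prod [Mul M] (A₁ A₂ : RWTA σ ar M) : RWTA σ ar M where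
  Q := A₁.Q × A₂.Q
  ν := fun q => A₁.ν q.1 * A₂.ν q.2
  δ := fun f qs q =>
    A₁.δ f (fun i => (qs i).1) q.1 ∧ A₂.δ f (fun i => (qs i).2) q.2

/-- The quotient of an RWTA by an equivalence relation on its states. -/
noncomputable def RWTA.quot [AddCommMonoid M] (A : RWTA σ ar M) (s : Setoid A.Q) :
    RWTA σ ar M where
  Q := Quotient s
  ν := fun C => ∑ᶠ q ∈ {q : A.Q | Quotient.mk s q = C}, A.ν q
  δ := fun f Cs C => ∃ (qs : Fin (ar f) → A.Q) (q : A.Q),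
    (∀ i, Quotient.mk s (qs i) = Cs i) ∧ Quotient.mk s q = C ∧ A.δ f qs q

/-- Relabelling of trees along a rank-preserving map of symbols. -/
def GTree.map {Γ : Type} {arΓ : Γ → ℕ} (g : σ → Γ) (hg : ∀ f, arΓ (g f) = ar f) :
    GTree σ ar → GTree Γ arΓ
  | .node f ts => .node (g f) (fun i => GTree.map g hg (ts (Fin.cast (hg f) i)))

/-- A morphism of RWTAs. -/
structure RWTA.Morphism {Γ : Type} {arΓ : Γ → ℕ}
    (A₁ : RWTA σ ar M) (A₂ : RWTA Γ arΓ M) where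
  stateMap : A₁.Q → A₂.Q
  symMap : σ → Γ
  symRank : ∀ f, arΓ (symMap f) = ar f
  transMap : ∀ (f : σ) (qs : Fin (ar f) → A₁.Q) (q : A₁.Q), A₁.δ f qs q →
    A₂.δ (symMap f) (fun i => stateMap (qs (Fin.cast (symRank f) i))) (stateMap q)
  weightMap : ∀ q, A₂.ν (stateMap q) = A₁.ν q

/-- Two RWTAs are isomorphic when there are mutually inverse morphisms between them. -/
def RWTA.Isomorphic {Γ : Type} {arΓ : Γ → ℕ}
    (A₁ : RWTA σ ar M) (A₂ : RWTA Γ arΓ M) : Prop :=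
  ∃ (μ : A₁.Morphism A₂) (μ' : A₂.Morphism A₁),
    (∀ q, μ'.stateMap (μ.stateMap q) = q) ∧ (∀ q, μ.stateMap (μ'.stateMap q) = q) ∧
    (∀ f, μ'.symMap (μ.symMap f) = f) ∧ (∀ f, μ.symMap (μ'.symMap f) = f)

/-- The size (number of nodes) of a tree. -/
def GTree.size : GTree σ ar → ℕ
  | .node _ ts => 1 + ∑ i, (ts i).size

/-- The set of subtrees of a tree. -/
def GTree.subTrees : GTree σ ar → Set (GTree σ ar)
  | .node f ts => insert (.node f ts) (⋃ i, (ts i).subTrees)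

theorem GTree.subTrees_finite (t : GTree σ ar) : t.subTrees.Finite := by
  induction t with
  | node f ts ih => exact Set.Finite.insert _ (Set.finite_iUnion fun i => ih i)

-- `t.subCount s` is the number of occurrences of `s` as a subtree of `t`,
-- i.e. `SubTreeSeries_t(s)`.
open Classical in
noncomputable def GTree.subCount : GTree σ ar → GTree σ ar → ℕ
  | .node f ts, s =>
      (if GTree.node f ts = s then 1 else 0) + ∑ i, (ts i).subCount s

/-- Indexing of the symbols of a tree by their position in a prefix traversal
(auxiliary function, threading the position of the root). -/
def GTree.sharpAux : GTree σ ar → ℕ → GTree (σ × ℕ) (fun p => ar p.1)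
  | .node f ts, n => .node (f, n) (fun i =>
      (ts i).sharpAux (n + 1 + ∑ j : Fin (ar f), if j.1 < i.1 then (ts j).size else 0))

/-- `t^♯`: the tree `t` with each symbol indexed by its prefix-traversal position. -/
def GTree.sharp (t : GTree σ ar) : GTree (σ × ℕ) (fun p => ar p.1) := t.sharpAux 0

/-- The map `h` dropping the indexes. -/
def GTree.unsharp : GTree (σ × ℕ) (fun p => ar p.1) → GTree σ ar :=
  GTree.map Prod.fst (fun _ => rfl)

/-- The subtree automaton `A_t` associated with a tree `t`. -/
def subtreeAut (t : GTree σ ar) : RWTA σ ar ℕ where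
  Q := {r // r ∈ t.sharp.subTrees}
  fin := (t.sharp.subTrees_finite).to_subtype
  ν := fun _ => 1
  δ := fun f qs q => ∃ n : ℕ,
    (q : GTree (σ × ℕ) (fun p => ar p.1)) = .node (f, n) (fun i => (qs i : GTree (σ × ℕ) (fun p => ar p.1)))

/-- The equivalence `∼_h` on the states of the subtree automaton. -/
def simH (t : GTree σ ar) : Setoid (subtreeAut t).Q :=
  Setoid.ker (fun r => GTree.unsharp r.1)

/-- The sequential subtree automaton `seq(A_t)` associated with a tree `t`. -/
noncomputable def seqSubtreeAut (t : GTree σ ar) : RWTA σ ar ℕ where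
  Q := {r // r ∈ t.subTrees}
  fin := (t.subTrees_finite).to_subtype
  ν := fun r => t.subCount r.1
  δ := fun f qs q => (q : GTree σ ar) = .node f (fun i => (qs i : GTree σ ar))

/-- `SubTreeSet(L)`. -/
def subTreeSet (L : Set (GTree σ ar)) : Set (GTree σ ar) := ⋃ t ∈ L, t.subTrees

/-- `SubTreeSeries_L`. -/
noncomputable def subSeriesL (L : Set (GTree σ ar)) (s : GTree σ ar) : ℕ :=
  ∑ᶠ t ∈ L, t.subCount s

/-- The sequential subtree automaton `A_L` associated with a finite tree language. -/
noncomputable def langSubtreeAut (L : Set (GTree σ ar)) (hL : L.Finite) : RWTA σ ar ℕ where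
  Q := {r // r ∈ subTreeSet L}
  fin := (hL.biUnion fun t _ => t.subTrees_finite).to_subtype
  ν := fun r => subSeriesL L r.1
  δ := fun f qs q => (q : GTree σ ar) = .node f (fun i => (qs i : GTree σ ar))

namespace RWTA

variable [AddCommMonoid M]

theorem Delta_subset (A : RWTA σ ar M) (t : GTree σ ar) :
    A.subset.Delta t = {A.Delta t} := by
  induction t with
  | node f ts ih =>
    ext S
    simp only [Delta, ih, Set.mem_ofPred_eq]
    constructor
    · rintro ⟨Ss, hSs, rfl⟩
      obtain rfl : Ss = fun i => A.Delta (ts i) := funext hSs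
      rfl
    · rintro rfl
      exact ⟨fun i => A.Delta (ts i), fun _ => rfl, rfl⟩

theorem subset_sequential (A : RWTA σ ar M) : A.subset.Sequential := fun t => by
  rw [Delta_subset]
  exact Set.subsingleton_singleton

theorem P_subset (A : RWTA σ ar M) (t : GTree σ ar) : A.subset.P t = A.P t := by
  rw [P, Delta_subset]
  exact finsum_mem_singleton

end RWTA

theorem rwta_sequentializable {σ : Type} {ar : σ → ℕ} {M : Type} [AddCommMonoid M]
    (A : RWTA σ ar M) :
    ∃ A' : RWTA σ ar M, A'.Sequential ∧ ∀ t : GTree σ ar, A.P t = A'.P t :=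
  ⟨A.subset, A.subset_sequential, fun t => (A.P_subset t).symm⟩
end

section
/- Let A be an RWTA over a graded alphabet Σ with weights in a commutative monoid M, and let A' be the sequential RWTA associated with A by the subset construction. Then A' is sequential (Card(Δ_{A'}(t)) ≤ 1 for every t ∈ T_Σ) and P_{A'}(t) = P_A(t) for every tree t ∈ T_Σ. -/
variable {σ : Type} {ar : σ → ℕ} {M : Type}

/-- The subset transition applied to the children's sets `Δ_A(tᵢ)` is, verbatim, the defining
clause of `Δ_A(f(t₁,…,tₖ))`. -/
theorem RWTA.subset_delta_eq_singleton [AddCommMonoid M] (A : RWTA σ ar M) (t : GTree σ ar) :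
    A.subset.Delta t = {A.Delta t} := by
  induction t with
  | node f ts ih =>
    ext S
    constructor
    · rintro ⟨Ss, hSs, rfl⟩
      obtain rfl : Ss = fun i => A.Delta (ts i) := funext fun i => (ih i ▸ hSs i :)
      rfl
    · rintro rfl
      exact ⟨fun i => A.Delta (ts i), fun i => (ih i).symm ▸ rfl, rfl⟩

theorem subset_sequential_and_realizes {σ : Type} {ar : σ → ℕ} {M : Type} [AddCommMonoid M]
    (A : RWTA σ ar M) :
    A.subset.Sequential ∧ ∀ t : GTree σ ar, A.subset.P t = A.P t := by
  refine ⟨fun t => ?_, fun t => ?_⟩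
  · rw [A.subset_delta_eq_singleton t]
    exact Set.subsingleton_singleton
  · rw [RWTA.P, A.subset_delta_eq_singleton t]
    exact finsum_mem_singleton (α := A.subset.Q)
end

section
/- Let A_1 and A_2 be two RWTAs over the same graded alphabet Σ with weights in a semiring K. Then for every tree t ∈ T_Σ, P_{A_1×A_2}(t) = P_{A_1}(t) × P_{A_2}(t). -/
variable {σ : Type} {ar : σ → ℕ} {M : Type}

theorem finsum_mem_prod_mul {α β R : Type*} [NonUnitalNonAssocSemiring R] {s : Set α}
    {t : Set β} (hs : s.Finite) (ht : t.Finite) (f : α → R) (g : β → R) :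
    ∑ᶠ p ∈ s ×ˢ t, f p.1 * g p.2 = (∑ᶠ a ∈ s, f a) * ∑ᶠ b ∈ t, g b := by
  rw [finsum_mem_eq_finite_toFinset_sum _ (hs.prod ht), finsum_mem_eq_finite_toFinset_sum _ hs,
    finsum_mem_eq_finite_toFinset_sum _ ht, ← Set.Finite.toFinset_prod, Finset.sum_product,
    Finset.sum_mul_sum]

theorem RWTA.delta_prod [Mul M] (A₁ A₂ : RWTA σ ar M) (t : GTree σ ar) :
    (A₁.prod A₂).Delta t = A₁.Delta t ×ˢ A₂.Delta t := by
  induction t with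
  | node f ts ih =>
    ext q
    simp only [RWTA.Delta, Set.mem_ofPred_eq]
    constructor
    · rintro ⟨qs, hqs, hδ₁, hδ₂⟩
      have hqs' : ∀ i, qs i ∈ A₁.Delta (ts i) ×ˢ A₂.Delta (ts i) := fun i => ih i ▸ hqs i
      exact ⟨⟨fun i => (qs i).1, fun i => (hqs' i).1, hδ₁⟩,
        ⟨fun i => (qs i).2, fun i => (hqs' i).2, hδ₂⟩⟩
    · rintro ⟨⟨qs₁, hqs₁, hδ₁⟩, qs₂, hqs₂, hδ₂⟩
      exact ⟨fun i => (qs₁ i, qs₂ i), fun i => (ih i).symm ▸ ⟨hqs₁ i, hqs₂ i⟩, hδ₁, hδ₂⟩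

theorem prod_series {σ : Type} {ar : σ → ℕ} {K : Type} [Semiring K]
    (A₁ A₂ : RWTA σ ar K) (t : GTree σ ar) :
    (A₁.prod A₂).P t = A₁.P t * A₂.P t := by
  rw [RWTA.P, RWTA.P, RWTA.P, RWTA.delta_prod]
  exact finsum_mem_prod_mul (Set.toFinite _) (Set.toFinite _) A₁.ν A₂.ν
end

section
/- Let Σ be the graded alphabet with Σ_0 = {a,b} and Σ_2 = {f}. There exist formal tree series P_1 and P_2 over the semiring ℕ, each realized by an RWTA over Σ, such that the image Im(P_1 ·_a P_2) of their a-product is infinite. (Concretely, one may take P_1 the characteristic series of the a-closure (f(a,b))^{*_a} and P_2 the series mapping a to 2 and every other tree to 0; then (P_1 ·_a P_2)(t) = 2^{height(t)} for every t in the a-closure.) -/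
variable {σ : Type} {ar : σ → ℕ} {M : Type}

/-- The graded alphabet with `Σ_0 = {a,b}` and `Σ_2 = {f}`. -/
inductive ABF : Type | a | b | f

/-- The arity function: `a` and `b` are constants, `f` is binary. -/
def arABF : ABF → ℕ | .a => 0 | .b => 0 | .f => 2

/-- Substitution of the (unique tree of the) language `{s}` for the
constant symbol `a` in a tree, i.e. the unique element of `t_{a ← {s}}`. -/
def substA : GTree ABF arABF → GTree ABF arABF → GTree ABF arABF
  | .node .a _, s => s
  | .node .b ts, _ => .node .b ts
  | .node .f ts, s => .node .f (fun i => substA (ts i) s)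

/-- The `a`-product of two tree series over `ℕ`. -/
noncomputable def aProd (P₁ P₂ : GTree ABF arABF → ℕ) (t : GTree ABF arABF) : ℕ :=
  ∑ᶠ p ∈ {p : GTree ABF arABF × GTree ABF arABF | substA p.1 p.2 = t}, P₁ p.1 * P₂ p.2

/-! `(P₁ ·ₐ P₂)(t)` sums `P₁(t₁) P₂(t₂)` over the factorizations `t = t₁ ·ₐ t₂`. Take for
`P₁ = P₂` the characteristic series of the combs `comb n = f(f(⋯f(a,b)⋯,b),b)`, the `a`-powers
of `f(a,b)`; it is realized by a two-state automaton (one state for the combs, one for `b`).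
Since `comb k ·ₐ comb m = comb (k + m)` and `comb` is injective, `comb n` has exactly `n + 1`
factorizations into combs, so `(P ·ₐ P)(comb n) = n + 1`. -/

theorem RWTA.P_eq_indicator_of_ν_eq_zero [AddCommMonoid M] (A : RWTA σ ar M) {q₀ : A.Q}
    (hν : ∀ q ≠ q₀, A.ν q = 0) (t : GTree σ ar) : A.P t = (A.Delta t).indicator A.ν q₀ := by
  rw [RWTA.P, finsum_mem_def]
  exact finsum_eq_single _ q₀ fun q hq => by simp [hν q hq]

def leafA : GTree ABF arABF := .node .a Fin.elim0

def leafB : GTree ABF arABF := .node .b Fin.elim0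

def fNode (l r : GTree ABF arABF) : GTree ABF arABF :=
  .node .f fun i => if i.1 = 0 then l else r

theorem node_f_eq_fNode (ts : Fin (arABF .f) → GTree ABF arABF) :
    GTree.node .f ts = fNode (ts ⟨0, two_pos⟩) (ts ⟨1, one_lt_two⟩) := by
  rw [fNode]
  congr 1
  funext ⟨i, hi⟩
  match i, hi with
  | 0, _ => rfl
  | 1, _ => rfl

theorem fNode_inj {l r l' r' : GTree ABF arABF} :
    fNode l r = fNode l' r' ↔ l = l' ∧ r = r' := by
  refine ⟨fun h => ?_, fun ⟨hl, hr⟩ => hl ▸ hr ▸ rfl⟩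
  injection h with _ h
  exact ⟨by simpa using congrFun h ⟨0, two_pos⟩,
    by simpa using congrFun h ⟨1, one_lt_two⟩⟩

theorem substA_fNode (l r s : GTree ABF arABF) :
    substA (fNode l r) s = fNode (substA l s) (substA r s) := by
  simp only [fNode, substA]
  congr 1
  funext i
  split_ifs <;> rfl

def comb : ℕ → GTree ABF arABF
  | 0 => leafA
  | n + 1 => fNode (comb n) leafB

theorem comb_injective : Function.Injective comb := by
  intro k m h
  induction k generalizing m with
  | zero => cases m with
    | zero => rfl
    | succ m => cases h
  | succ k ih => cases m with
    | zero => cases h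
    | succ m => exact congrArg (· + 1) (ih (fNode_inj.1 h).1)

theorem substA_comb_comb (k m : ℕ) : substA (comb k) (comb m) = comb (k + m) := by
  induction k with
  | zero => rw [Nat.zero_add]; rfl
  | succ k ih => rw [comb, substA_fNode, ih, Nat.succ_add]; rfl

theorem fNode_mem_range_comb_iff {l r : GTree ABF arABF} :
    fNode l r ∈ Set.range comb ↔ l ∈ Set.range comb ∧ r = leafB := by
  constructor
  · rintro ⟨k, hk⟩
    cases k with
    | zero => cases hk
    | succ k => exact (fNode_inj.1 hk).imp (fun h => ⟨k, h⟩) Eq.symm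
  · rintro ⟨⟨k, rfl⟩, rfl⟩
    exact ⟨k + 1, rfl⟩

abbrev combAut : RWTA ABF arABF ℕ where
  Q := Bool
  ν := Bool.toNat
  δ
    | .a, _, q => q = true
    | .b, _, q => q = false
    | .f, qs, q => qs ⟨0, two_pos⟩ = true ∧ qs ⟨1, one_lt_two⟩ = false ∧ q = true

theorem false_mem_combAut_delta_iff (t : GTree ABF arABF) :
    (false : combAut.Q) ∈ combAut.Delta t ↔ t = leafB := by
  obtain ⟨g, ts⟩ := t
  cases g with
  | a => exact iff_of_false (fun ⟨_, _, h⟩ => Bool.false_ne_true h) (fun h => by cases h)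
  | b =>
    refine iff_of_true ⟨fun i => i.elim0, fun i => i.elim0, rfl⟩ ?_
    rw [leafB]; congr; funext i; exact i.elim0
  | f => exact iff_of_false (fun ⟨_, _, _, _, h⟩ => Bool.false_ne_true h) (fun h => by cases h)

theorem true_mem_combAut_delta_node_f_iff (ts : Fin (arABF .f) → GTree ABF arABF) :
    (true : combAut.Q) ∈ combAut.Delta (.node .f ts) ↔
      true ∈ combAut.Delta (ts ⟨0, two_pos⟩) ∧ false ∈ combAut.Delta (ts ⟨1, one_lt_two⟩) := by
  constructor
  · rintro ⟨qs, hqs, h₀, h₁, -⟩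
    exact ⟨h₀ ▸ hqs _, h₁ ▸ hqs _⟩
  · rintro ⟨h₀, h₁⟩
    refine ⟨fun i => decide (i.1 = 0), fun ⟨i, hi⟩ => ?_, rfl, rfl, rfl⟩
    match i, hi with
    | 0, _ => exact h₀
    | 1, _ => exact h₁

theorem true_mem_combAut_delta_iff (t : GTree ABF arABF) :
    (true : combAut.Q) ∈ combAut.Delta t ↔ t ∈ Set.range comb := by
  induction t with
  | node g ts ih =>
    cases g with
    | a =>
      refine iff_of_true ⟨fun i => i.elim0, fun i => i.elim0, rfl⟩ ⟨0, ?_⟩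
      rw [comb, leafA]; congr; funext i; exact i.elim0
    | b =>
      refine iff_of_false (fun ⟨_, _, h⟩ => Bool.noConfusion h) fun ⟨k, hk⟩ => ?_
      cases k <;> cases hk
    | f =>
      rw [true_mem_combAut_delta_node_f_iff, ih, false_mem_combAut_delta_iff, node_f_eq_fNode,
        fNode_mem_range_comb_iff]

noncomputable def combSeries : GTree ABF arABF → ℕ := (Set.range comb).indicator 1

theorem combAut_P : combAut.P = combSeries := by
  funext t
  rw [RWTA.P_eq_indicator_of_ν_eq_zero combAut (q₀ := true) (by decide), combSeries]
  by_cases h : t ∈ Set.range comb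
  · rw [Set.indicator_of_mem ((true_mem_combAut_delta_iff t).2 h), Set.indicator_of_mem h]; rfl
  · rw [Set.indicator_of_notMem (mt (true_mem_combAut_delta_iff t).1 h), Set.indicator_of_notMem h]

open Finset in
theorem aProd_combSeries_comb (n : ℕ) : aProd combSeries combSeries (comb n) = n + 1 := by
  have hsupport : ∀ p ∈ Function.support fun p : GTree ABF arABF × GTree ABF arABF =>
      combSeries p.1 * combSeries p.2,
      p ∈ {p | substA p.1 p.2 = comb n} ↔ p ∈ Prod.map comb comb '' ↑(antidiagonal n) := by
    rintro ⟨t₁, t₂⟩ hp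
    obtain ⟨⟨k, rfl⟩, ⟨m, rfl⟩⟩ : t₁ ∈ Set.range comb ∧ t₂ ∈ Set.range comb :=
      ⟨Set.mem_of_indicator_ne_zero (left_ne_zero_of_mul hp),
        Set.mem_of_indicator_ne_zero (right_ne_zero_of_mul hp)⟩
    rw [Set.mem_ofPred_eq, substA_comb_comb, comb_injective.eq_iff, ← Prod.map_apply,
      (comb_injective.prodMap comb_injective).mem_set_image, mem_coe,
      HasAntidiagonal.mem_antidiagonal]
  rw [aProd, finsum_mem_inter_support_eq' _ _ _ hsupport,
    finsum_mem_image (comb_injective.prodMap comb_injective).injOn, finsum_mem_coe_finset]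
  simp [combSeries]

theorem aProd_image_infinite :
    ∃ P₁ P₂ : GTree ABF arABF → ℕ,
      (∃ A₁ : RWTA ABF arABF ℕ, ∀ t, A₁.P t = P₁ t) ∧
      (∃ A₂ : RWTA ABF arABF ℕ, ∀ t, A₂.P t = P₂ t) ∧
      (Set.range (aProd P₁ P₂)).Infinite := by
  refine ⟨combSeries, combSeries, ⟨combAut, congrFun combAut_P⟩, ⟨combAut, congrFun combAut_P⟩, ?_⟩
  refine Set.infinite_of_injective_forall_mem (add_left_injective 1) fun n => ⟨comb n, ?_⟩
  exact aProd_combSeries_comb n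
end

section
/- Let A = (Σ,Q,ν,δ) be an RWTA over a graded alphabet Σ with weights in a commutative monoid M and let ∼ be an equivalence relation on Q that is down compatible with A. Then the quotient A_∼ realizes the same tree series as A: P_A(t) = P_{A_∼}(t) for every tree t ∈ T_Σ. -/
variable {σ : Type} {ar : σ → ℕ} {M : Type}

/-! Down compatibility means that related states are reached by exactly the same trees, so a state
of `A` is reached by `t` as soon as its class is reached by `t` in `A_∼`. Hence `Δ_A(t)` is the
union of the classes in `Δ_{A_∼}(t)`, and summing `ν` over it class by class gives `ν'(Δ_{A_∼}(t))`. -/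

theorem finsum_mem_preimage_eq_finsum_mem_fiber {α β M : Type*} [AddCommMonoid M]
    [Finite α] [Finite β] (g : α → β) (f : α → M) (T : Set β) :
    ∑ᶠ a ∈ g ⁻¹' T, f a = ∑ᶠ b ∈ T, ∑ᶠ a ∈ {a | g a = b}, f a := by
  have hcover : g ⁻¹' T = ⋃ b ∈ T, {a | g a = b} := by ext; simp
  rw [hcover, finsum_mem_biUnion _ (Set.toFinite T) fun _ _ => Set.toFinite _]
  intro b₁ _ b₂ _ hne
  exact Set.disjoint_left.2 fun _ h₁ h₂ => hne (h₁.symm.trans h₂)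

namespace RWTA

def DownCompatible (A : RWTA σ ar M) (s : Setoid A.Q) : Prop :=
  ∀ q₁ q₂ : A.Q, s.r q₁ q₂ → A.DownLang q₁ = A.DownLang q₂

variable [AddCommMonoid M] {A : RWTA σ ar M} {s : Setoid A.Q}

theorem mk_mem_quot_Delta {t : GTree σ ar} {q : A.Q} (hq : q ∈ A.Delta t) :
    Quotient.mk s q ∈ (A.quot s).Delta t := by
  induction t generalizing q with
  | node f ts ih =>
    obtain ⟨qs, hqs, hδ⟩ := hq
    exact ⟨fun i => Quotient.mk s (qs i), fun i => ih i (hqs i), qs, q, fun _ => rfl, rfl, hδ⟩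

theorem DownCompatible.mem_Delta_of_mk_mem (hdc : A.DownCompatible s) {t : GTree σ ar}
    {q : A.Q} (hq : Quotient.mk s q ∈ (A.quot s).Delta t) : q ∈ A.Delta t := by
  induction t generalizing q with
  | node f ts ih =>
    obtain ⟨Cs, hCs, qs, q', hqs, hq', hδ⟩ := hq
    obtain rfl : Cs = fun i => Quotient.mk s (qs i) := funext fun i => (hqs i).symm
    have hq'mem : q' ∈ A.Delta (.node f ts) := ⟨qs, fun i => ih i (hCs i), hδ⟩
    change GTree.node f ts ∈ A.DownLang q
    rwa [hdc q q' (Quotient.exact hq'.symm)]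

theorem DownCompatible.Delta_eq_preimage (hdc : A.DownCompatible s) (t : GTree σ ar) :
    A.Delta t = Quotient.mk s ⁻¹' (A.quot s).Delta t :=
  Set.ext fun _ => ⟨mk_mem_quot_Delta, hdc.mem_Delta_of_mk_mem⟩

end RWTA

theorem quot_series {σ : Type} {ar : σ → ℕ} {M : Type} [AddCommMonoid M]
    (A : RWTA σ ar M) (s : Setoid A.Q)
    (hdc : ∀ q₁ q₂ : A.Q, s.r q₁ q₂ → A.DownLang q₁ = A.DownLang q₂) :
    ∀ t : GTree σ ar, A.P t = (A.quot s).P t := by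
  intro t
  calc A.P t = ∑ᶠ q ∈ Quotient.mk s ⁻¹' (A.quot s).Delta t, A.ν q := by
        rw [← RWTA.DownCompatible.Delta_eq_preimage hdc]; rfl
    _ = (A.quot s).P t := finsum_mem_preimage_eq_finsum_mem_fiber _ _ _
end

section
/- Let Σ be a graded alphabet and t a tree in T_Σ. The subtree automaton A_t associated with t realizes the subtree series of t: P_{A_t} = SubTreeSeries_t, i.e. for every tree s ∈ T_Σ, P_{A_t}(s) equals the number of occurrences of s as a subtree of t. -/
variable {σ : Type} {ar : σ → ℕ} {M : Type}

/-!
A state of `A_t` is a subtree of `t^♯`, and it is reached from `s` exactly when dropping its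
indexes yields `s`; so `P_{A_t}(s)` counts the subtrees of `t^♯` that are copies of `s`. The root
index of a subtree of `t^♯` is its prefix position in `t`, hence the multiset of subtrees of `t^♯`
has no repetitions, while its image under `h` is the multiset of subtrees of `t`, in which `s`
occurs `SubTreeSeries_t(s)` times.
-/

-- Child `i` of a node occupies positions `n + 1 + ∑_{j<i} size j, …` in `sharpAux`; this bounds
-- where its block ends.
theorem sum_ite_lt_add_le_sum_ite_lt {k : ℕ} (s : Fin k → ℕ) {i : Fin k} {m : ℕ} (him : i.1 < m) :
    (∑ j, if j.1 < i.1 then s j else 0) + s i ≤ ∑ j, if j.1 < m then s j else 0 := by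
  have h : s i = ∑ j, if j = i then s j else 0 := by simp
  rw [h, ← Finset.sum_add_distrib]
  refine Finset.sum_le_sum fun j _ => ?_
  rcases eq_or_ne j i with rfl | h2
  · simp [him]
  · by_cases h1 : j.1 < i.1
    · simp [h1, h2, h1.trans him]
    · simp [h1, h2]

theorem Multiset.Nodup.count_map_eq_ncard {α β : Type*} [DecidableEq β] {m : Multiset α}
    (hm : m.Nodup) (f : α → β) (b : β) : (m.map f).count b = {a | a ∈ m ∧ f a = b}.ncard := by
  classical
  have hset : {a | a ∈ m ∧ f a = b} = ↑(m.filter fun a => b = f a).toFinset := by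
    ext a
    simp [eq_comm]
  rw [Multiset.count_map, hset, Set.ncard_coe_finset,
    Multiset.toFinset_card_of_nodup (hm.filter _)]

namespace GTree

def root : GTree σ ar → σ
  | .node f _ => f

def subTreeMultiset : GTree σ ar → Multiset (GTree σ ar)
  | .node f ts => node f ts ::ₘ ∑ i, (ts i).subTreeMultiset

theorem mem_subTreeMultiset {t u : GTree σ ar} : u ∈ t.subTreeMultiset ↔ u ∈ t.subTrees := by
  induction t with
  | node f ts ih => simp [subTreeMultiset, subTrees, Multiset.mem_sum, ih]

theorem count_subTreeMultiset [DecidableEq (GTree σ ar)] (t s : GTree σ ar) :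
    t.subTreeMultiset.count s = t.subCount s := by
  induction t with
  | node f ts ih =>
    rw [subTreeMultiset, subCount, Multiset.count_cons, Multiset.count_sum', add_comm]
    simp only [ih, eq_comm]

theorem subTreeMultiset_map {Γ : Type} {arΓ : Γ → ℕ} (g : σ → Γ) (hg : ∀ f, arΓ (g f) = ar f)
    (t : GTree σ ar) : (t.map g hg).subTreeMultiset = t.subTreeMultiset.map (map g hg) := by
  induction t with
  | node f ts ih =>
    rw [map, subTreeMultiset, subTreeMultiset, Multiset.map_cons,
      ← Multiset.coe_mapAddMonoidHom, map_sum]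
    congr 1
    simp only [Multiset.coe_mapAddMonoidHom, ih]
    exact Fintype.sum_equiv (finCongr (hg f)) _ _ (fun _ => rfl)

theorem subTrees_subset_of_mem {t u : GTree σ ar} (hu : u ∈ t.subTrees) :
    u.subTrees ⊆ t.subTrees := by
  induction t with
  | node f ts ih =>
    rcases hu with rfl | hu
    · rfl
    · obtain ⟨i, hi⟩ := Set.mem_iUnion.1 hu
      exact (ih i hi).trans fun x hx => Set.mem_insert_of_mem _ (Set.mem_iUnion.2 ⟨i, hx⟩)

theorem mem_subTrees_self (t : GTree σ ar) : t ∈ t.subTrees := by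
  cases t
  exact Set.mem_insert _ _

theorem mem_subTrees_node {f : σ} (ts : Fin (ar f) → GTree σ ar) (i : Fin (ar f)) :
    ts i ∈ (node f ts).subTrees :=
  Set.mem_insert_of_mem _ (Set.mem_iUnion.2 ⟨i, (ts i).mem_subTrees_self⟩)

theorem unsharp_node (p : σ × ℕ) (rs : Fin (ar p.1) → GTree (σ × ℕ) (fun p => ar p.1)) :
    (node p rs).unsharp = node p.1 (fun i => (rs i).unsharp) :=
  rfl

theorem unsharp_sharpAux (t : GTree σ ar) (n : ℕ) : (t.sharpAux n).unsharp = t := by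
  induction t generalizing n with
  | node f ts ih =>
    rw [sharpAux, unsharp_node]
    exact congrArg (node f) (funext fun i => ih i _)

theorem unsharp_sharp (t : GTree σ ar) : t.sharp.unsharp = t :=
  unsharp_sharpAux t 0

theorem root_snd_mem_Ico_of_mem_sharpAux (t : GTree σ ar) (n : ℕ)
    {x : GTree (σ × ℕ) (fun p => ar p.1)} (hx : x ∈ (t.sharpAux n).subTreeMultiset) :
    x.root.2 ∈ Set.Ico n (n + t.size) := by
  induction t generalizing n x with
  | node f ts ih =>
    rw [sharpAux, subTreeMultiset, Multiset.mem_cons, Multiset.mem_sum] at hx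
    rw [size, Set.mem_Ico]
    rcases hx with rfl | ⟨i, -, hi⟩
    · simp only [root]
      omega
    · have hi := Set.mem_Ico.1 (ih i _ hi)
      have hlast := sum_ite_lt_add_le_sum_ite_lt (fun j => (ts j).size) i.isLt
      simp only [Fin.is_lt, if_true] at hlast
      omega

theorem nodup_subTreeMultiset_sharpAux (t : GTree σ ar) (n : ℕ) :
    (t.sharpAux n).subTreeMultiset.Nodup := by
  induction t generalizing n with
  | node f ts ih =>
    rw [sharpAux, subTreeMultiset, Multiset.nodup_cons, Multiset.mem_sum]
    refine ⟨?_, ?_⟩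
    · rintro ⟨i, -, hi⟩
      have hi := Set.mem_Ico.1 (root_snd_mem_Ico_of_mem_sharpAux _ _ hi)
      simp only [root] at hi
      omega
    refine Multiset.nodup_bind.2
      ⟨fun i _ => ih i _, Finset.univ.nodup.pairwise fun i hi j hj hij => ?_⟩
    wlog hlt : i < j generalizing i j
    · exact (this j hj i hi hij.symm (lt_of_le_of_ne (not_lt.1 hlt) hij.symm)).symm
    rw [Function.onFun, Multiset.disjoint_left]
    intro x hxi hxj
    have hxi := Set.mem_Ico.1 (root_snd_mem_Ico_of_mem_sharpAux _ _ hxi)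
    have hxj := Set.mem_Ico.1 (root_snd_mem_Ico_of_mem_sharpAux _ _ hxj)
    have hij := sum_ite_lt_add_le_sum_ite_lt (fun j => (ts j).size) (m := j.1) hlt
    omega

end GTree

open GTree

theorem subtreeAut_mem_Delta_iff {t s : GTree σ ar} {q : (subtreeAut t).Q} :
    q ∈ (subtreeAut t).Delta s ↔ q.1.unsharp = s := by
  induction s generalizing q with
  | node f ts ih =>
    obtain ⟨⟨⟨g, n⟩, rs⟩, hq⟩ := q
    simp only [RWTA.Delta, subtreeAut, unsharp_node]
    constructor
    · rintro ⟨qs, hqs, m, hrs⟩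
      injection hrs with hgf hrs
      obtain ⟨rfl, rfl⟩ := Prod.mk.inj hgf
      obtain rfl := eq_of_heq hrs
      exact congrArg (node g) (funext fun i => (ih i).1 (hqs i))
    · intro h
      injection h with hgf hrs
      subst hgf
      have hrs_mem (i : Fin (ar g)) : rs i ∈ t.sharp.subTrees :=
        subTrees_subset_of_mem hq (mem_subTrees_node (ar := fun p : σ × ℕ => ar p.1) rs i)
      exact ⟨fun i => ⟨rs i, hrs_mem i⟩, fun i => (ih i).2 (congrFun (eq_of_heq hrs) i), n, rfl⟩

theorem subtreeAut_series {σ : Type} {ar : σ → ℕ} (t : GTree σ ar) (s : GTree σ ar) :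
    (subtreeAut t).P s = t.subCount s := by
  classical
  calc (subtreeAut t).P s = ((subtreeAut t).Delta s).ncard := finsum_one
    _ = {q : (subtreeAut t).Q | q.1.unsharp = s}.ncard := by
      congr 1
      ext q
      exact subtreeAut_mem_Delta_iff
    _ = {x | x ∈ t.sharp.subTreeMultiset ∧ x.unsharp = s}.ncard := by
      change {q : {r // r ∈ t.sharp.subTrees} | q.1.unsharp = s}.ncard = _
      rw [← Set.ncard_image_of_injective _ Subtype.val_injective]
      congr 1
      ext x
      simp [mem_subTreeMultiset, and_comm]
    _ = (t.sharp.subTreeMultiset.map unsharp).count s :=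
      ((nodup_subTreeMultiset_sharpAux t 0).count_map_eq_ncard _ _).symm
    _ = t.subCount s := by
      rw [unsharp, ← subTreeMultiset_map, ← unsharp, unsharp_sharp, count_subTreeMultiset]
end

section
/- Let Σ be a graded alphabet, t a tree in T_Σ, and A_t = (Σ,Q,ν,δ) the subtree automaton associated with t. Then for every tree r ∈ SubTree(t), Δ_{A_t}(r) = {r' ∈ Q | h(r') = r}, the set of indexed subtrees of t^♯ whose de-indexing is r. -/
variable {σ : Type} {ar : σ → ℕ} {M : Type}

/-! Each transition of `A_t` rebuilds an indexed subtree from its children, so a run on `r` can only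
end in an indexed subtree that de-indexes to `r` (induction on `r`), and every indexed subtree `q` is
reached by the run on `h(q)` that follows `q` itself (induction on `q`). -/

theorem GTree.mem_subTrees_self_s12 (t : GTree σ ar) : t ∈ t.subTrees := by
  cases t with
  | node f ts => exact Set.mem_insert _ _

theorem GTree.mem_subTrees_of_node_mem {s : GTree σ ar} {f : σ}
    {ts : Fin (ar f) → GTree σ ar} (h : GTree.node f ts ∈ s.subTrees) (i : Fin (ar f)) :
    ts i ∈ s.subTrees := by
  induction s with
  | node g ss ih =>
    refine Set.mem_insert_iff.2 (Or.inr (Set.mem_iUnion.2 ?_))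
    rcases h with h | h
    · cases h
      exact ⟨i, (ts i).mem_subTrees_self_s12⟩
    · obtain ⟨j, hj⟩ := Set.mem_iUnion.1 h
      exact ⟨j, ih j hj⟩

theorem GTree.unsharp_node_s12 (p : σ × ℕ) (ss : Fin (ar p.1) → GTree (σ × ℕ) (fun p => ar p.1)) :
    GTree.unsharp (.node p ss) = .node p.1 (fun i => (ss i).unsharp) :=
  rfl

theorem RWTA.mem_Delta_node (A : RWTA σ ar M) (f : σ) (ts : Fin (ar f) → GTree σ ar)
    (q : A.Q) :
    q ∈ A.Delta (.node f ts) ↔ ∃ qs : Fin (ar f) → A.Q, (∀ i, qs i ∈ A.Delta (ts i)) ∧ A.δ f qs q :=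
  Iff.rfl

theorem subtreeAut_unsharp_of_mem_Delta (t : GTree σ ar) (r : GTree σ ar)
    (q : (subtreeAut t).Q) (hq : q ∈ (subtreeAut t).Delta r) : GTree.unsharp q.1 = r := by
  induction r generalizing q with
  | node f ts ih =>
    obtain ⟨qs, hqs, n, hq⟩ := ((subtreeAut t).mem_Delta_node f ts q).1 hq
    rw [hq, GTree.unsharp_node_s12]
    exact congrArg (GTree.node f) (funext fun i => ih i (qs i) (hqs i))

theorem subtreeAut_mem_Delta_unsharp (t : GTree σ ar) (s : GTree (σ × ℕ) (fun p => ar p.1))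
    (hs : s ∈ t.sharp.subTrees) :
    (⟨s, hs⟩ : (subtreeAut t).Q) ∈ (subtreeAut t).Delta s.unsharp := by
  induction s with
  | node p ss ih =>
    exact ((subtreeAut t).mem_Delta_node p.1 _ _).2
      ⟨fun i => ⟨ss i, GTree.mem_subTrees_of_node_mem hs i⟩, fun i => ih i _, p.2, rfl⟩

theorem subtreeAut_delta_general {σ : Type} {ar : σ → ℕ} (t : GTree σ ar)
    (r : GTree σ ar) :
    (subtreeAut t).Delta r = {r' : (subtreeAut t).Q | GTree.unsharp r'.1 = r} := by
  ext ⟨q, hq⟩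
  constructor
  · exact subtreeAut_unsharp_of_mem_Delta t r _
  · rintro rfl
    exact subtreeAut_mem_Delta_unsharp t q hq

theorem subtreeAut_delta {σ : Type} {ar : σ → ℕ} (t : GTree σ ar)
    (r : GTree σ ar) (hr : r ∈ t.subTrees) :
    (subtreeAut t).Delta r = {r' : (subtreeAut t).Q | GTree.unsharp r'.1 = r} :=
  subtreeAut_delta_general t r
end
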